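/- arXiv:2103.05938 — 7 statements merged into one kernel-verified Lean document; each statement's English description precedes it below -/
import Mathlib

section
/- Let Γ be a group and φ: Γ → Γ an injective endomorphism whose image φ(Γ) has finite index in Γ. Then the intersection ⋂_{n>0} φⁿ(Γ) is finite if and only if every subgroup H ≤ Γ with φ(H) = H is finite. -/
/-!
An injective `φ` maps `K = ⋂ₙ φⁿ⁺¹(Γ)` onto itself, since `φ` commutes with intersections and the
ranges `φⁿ(Γ)` decrease; conversely every `φ`-invariant subgroup `H = φⁿ(H)` lies in every `φⁿ(Γ)`,
hence in `K`. So `K` is the largest subgroup with `φ(H) = H`, and it is finite iff all of them are.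
-/

namespace Monoid.End

variable {G : Type*} [Group G] (φ : Monoid.End G)

lemma range_pow_succ (n : ℕ) :
    MonoidHom.range ((φ ^ (n + 1) : Monoid.End G) : G →* G) =
      (MonoidHom.range ((φ ^ n : Monoid.End G) : G →* G)).map (φ : G →* G) := by
  rw [pow_succ']
  exact MonoidHom.range_comp _ _

lemma map_pow_succ (H : Subgroup G) (n : ℕ) :
    H.map ((φ ^ (n + 1) : Monoid.End G) : G →* G) =
      (H.map ((φ ^ n : Monoid.End G) : G →* G)).map (φ : G →* G) := by
  rw [pow_succ']
  exact (Subgroup.map_map _ _ _).symm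

lemma antitone_range_pow :
    Antitone fun n : ℕ => MonoidHom.range ((φ ^ n : Monoid.End G) : G →* G) := by
  refine antitone_nat_of_succ_le fun n => ?_
  rw [pow_succ]
  exact (MonoidHom.range_comp _ _).trans_le (Subgroup.map_le_range _ _)

lemma map_pow_eq_self {H : Subgroup G} (hH : H.map (φ : G →* G) = H) (n : ℕ) :
    H.map ((φ ^ n : Monoid.End G) : G →* G) = H := by
  induction n with
  | zero => exact H.map_id
  | succ n ih => rw [map_pow_succ, ih, hH]

lemma le_iInf_range_pow_succ {H : Subgroup G} (hH : H.map (φ : G →* G) = H) :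
    H ≤ ⨅ n : ℕ, MonoidHom.range ((φ ^ (n + 1) : Monoid.End G) : G →* G) :=
  le_iInf fun n => (map_pow_eq_self φ hH (n + 1)).symm.le.trans (Subgroup.map_le_range _ _)

lemma map_iInf_range_pow_succ (hinj : Function.Injective φ) :
    (⨅ n : ℕ, MonoidHom.range ((φ ^ (n + 1) : Monoid.End G) : G →* G)).map (φ : G →* G) =
      ⨅ n : ℕ, MonoidHom.range ((φ ^ (n + 1) : Monoid.End G) : G →* G) := by
  rw [Subgroup.map_iInf _ hinj]
  simp only [← range_pow_succ]
  exact ((antitone_range_pow φ).comp_monotone add_left_mono).iInf_nat_add 1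

end Monoid.End

theorem stmt0_general {Γ : Type*} [Group Γ] (φ : Monoid.End Γ)
    (hinj : Function.Injective φ) :
    Finite ↥(⨅ n : ℕ, MonoidHom.range ((φ ^ (n + 1) : Monoid.End Γ) : Γ →* Γ)) ↔
      ∀ H : Subgroup Γ, H.map (φ : Γ →* Γ) = H → Finite ↥H := by
  refine ⟨fun hfin H hH => ?_, fun h => h _ (φ.map_iInf_range_pow_succ hinj)⟩
  exact Finite.of_injective _ (Subgroup.inclusion_injective (φ.le_iInf_range_pow_succ hH))

theorem stmt0 {Γ : Type*} [Group Γ] (φ : Monoid.End Γ)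
    (hinj : Function.Injective φ) (hfi : (MonoidHom.range (φ : Γ →* Γ)).FiniteIndex) :
    Finite ↥(⨅ n : ℕ, MonoidHom.range ((φ ^ (n + 1) : Monoid.End Γ) : Γ →* Γ)) ↔
      ∀ H : Subgroup Γ, H.map (φ : Γ →* Γ) = H → Finite ↥H :=
  stmt0_general φ hinj
end

section
/- Let Γ be a group and φ: Γ → Γ an injective endomorphism. Then the subgroup H₀ = ⋂_{n>0} φⁿ(Γ) satisfies φ(H₀) = H₀. -/
namespace Monoid.End

variable {G : Type*} [Group G]

theorem range_pow_antitone (φ : Monoid.End G) :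
    Antitone fun n : ℕ => ((φ ^ n : Monoid.End G) : G →* G).range := by
  refine antitone_nat_of_succ_le fun n => ?_
  rintro _ ⟨y, rfl⟩
  exact ⟨φ y, by rw [pow_succ]; rfl⟩

theorem map_range_pow (φ : Monoid.End G) (n : ℕ) :
    ((φ ^ n : Monoid.End G) : G →* G).range.map (φ : G →* G) =
      ((φ ^ (n + 1) : Monoid.End G) : G →* G).range := by
  rw [pow_succ']
  exact (MonoidHom.range_comp _ _).symm

end Monoid.End

theorem stmt1 {Γ : Type*} [Group Γ] (φ : Monoid.End Γ)
    (hinj : Function.Injective φ) :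
    (⨅ n : ℕ, MonoidHom.range ((φ ^ (n + 1) : Monoid.End Γ) : Γ →* Γ)).map (φ : Γ →* Γ) =
      ⨅ n : ℕ, MonoidHom.range ((φ ^ (n + 1) : Monoid.End Γ) : Γ →* Γ) := by
  have hanti := Monoid.End.range_pow_antitone φ
  rw [Subgroup.map_iInf _ hinj]
  simp only [Monoid.End.map_range_pow]
  exact (hanti.iInf_nat_add 2).trans (hanti.iInf_nat_add 1).symm
end

section
/- Let Γ be a group in which every subgroup is finitely generated, φ: Γ → Γ a monomorphism with image of finite index, and Γ' ≤ Γ a finite index φ-invariant subgroup such that the restriction of φ to Γ' is strongly scale-invariant. Then φ is strongly scale-invariant. -/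
/-!
Let `H = ⋂ₙ φⁿ(Γ)`. For injective `φ` we have `φ(H) = H`, so `φ` restricts to an automorphism `β`
of the finitely generated group `H`. The subgroups `βⁿ(Γ' ∩ H)` all have the same finite index in
`H`, and a finitely generated group has only finitely many subgroups of a given index, so their
intersection `L` still has finite index in `H`. But `L` lies in `⋂ₙ φⁿ(Γ') = ⋂ₙ ψⁿ(Γ')`, which is
finite; hence `H` is finite.
-/

def StronglyScaleInvariant {Γ : Type*} [Group Γ] (φ : Monoid.End Γ) : Prop :=
  Function.Injective φ ∧ (MonoidHom.range (φ : Γ →* Γ)).FiniteIndex ∧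
    Finite ↥(⨅ n : ℕ, MonoidHom.range ((φ ^ (n + 1) : Monoid.End Γ) : Γ →* Γ))

open Function Subgroup

namespace Group.FG

variable {G : Type*} [Group G] [Group.FG G]

theorem finite_monoidHom (M : Type*) [Monoid M] [Finite M] : Finite (G →* M) := by
  obtain ⟨S, hS⟩ := Group.FG.out (G := G)
  exact .of_injective (fun f : G →* M ↦ fun s : S ↦ f s) fun f g hfg ↦
    MonoidHom.eq_of_eqOn_dense hS fun x hx ↦ congrFun hfg ⟨x, hx⟩

-- A subgroup of index `n` is a point stabilizer for some action of `G` on `Fin n`.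
theorem finite_setOf_index_eq {n : ℕ} (hn : n ≠ 0) : {K : Subgroup G | K.index = n}.Finite := by
  have := finite_monoidHom (G := G) (Equiv.Perm (Fin n))
  refine (Set.finite_range fun fp : (G →* Equiv.Perm (Fin n)) × Fin n ↦
    (MulAction.stabilizer _ fp.2).comap fp.1).subset ?_
  rintro K (hK : K.index = n)
  have : K.FiniteIndex := ⟨hK ▸ hn⟩
  let e : G ⧸ K ≃ Fin n := Finite.equivFinOfCardEq (by rw [← K.index_eq_card, hK])
  refine ⟨(e.permCongrHom.toMonoidHom.comp (MulAction.toPermHom G (G ⧸ K)), e (1 : G)), ?_⟩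
  ext g
  simp [Equiv.permCongr_apply, QuotientGroup.eq]

theorem finiteIndex_iInf_of_index_eq {ι : Type*} {f : ι → Subgroup G} {n : ℕ} (hn : n ≠ 0)
    (hf : ∀ i, (f i).index = n) : (⨅ i, f i).FiniteIndex := by
  have : Finite (Set.range f) :=
    ((finite_setOf_index_eq hn).subset (Set.range_subset_iff.mpr hf)).to_subtype
  rw [← sInf_range, sInf_eq_iInf']
  exact finiteIndex_iInf fun ⟨_, i, hi⟩ ↦ ⟨hi ▸ (hf i).symm ▸ hn⟩

end Group.FG

namespace Monoid.End

variable {G : Type*} [Group G] (φ : Monoid.End G)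

def iInfRange : Subgroup G := ⨅ n : ℕ, MonoidHom.range ((φ ^ (n + 1) : Monoid.End G) : G →* G)

variable {φ}

theorem mem_iInfRange {x : G} : x ∈ φ.iInfRange ↔ ∀ n, ∃ y, φ^[n + 1] y = x := by
  simp only [iInfRange, mem_iInf]
  rfl

theorem apply_mem_iInfRange {x : G} (hx : x ∈ φ.iInfRange) : φ x ∈ φ.iInfRange := by
  refine mem_iInfRange.mpr fun n ↦ ?_
  cases n with
  | zero => exact ⟨x, rfl⟩
  | succ n =>
    obtain ⟨y, rfl⟩ := mem_iInfRange.mp hx n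
    exact ⟨y, iterate_succ_apply' φ (n + 1) y⟩

theorem exists_apply_eq_of_mem_iInfRange (hφ : Injective φ) {x : G} (hx : x ∈ φ.iInfRange) :
    ∃ y ∈ φ.iInfRange, φ y = x := by
  obtain ⟨y, rfl⟩ := mem_iInfRange.mp hx 0
  refine ⟨y, mem_iInfRange.mpr fun n ↦ ?_, rfl⟩
  obtain ⟨z, hz⟩ := mem_iInfRange.mp hx (n + 1)
  exact ⟨z, hφ ((iterate_succ_apply' φ (n + 1) z).symm.trans hz)⟩

variable (φ) in
def restrictIInfRange : Monoid.End φ.iInfRange :=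
  ((φ : G →* G).domRestrict φ.iInfRange).codRestrict φ.iInfRange fun x ↦ apply_mem_iInfRange x.2

theorem bijective_restrictIInfRange (hφ : Injective φ) : Bijective φ.restrictIInfRange := by
  refine ⟨fun x y hxy ↦ Subtype.ext (hφ (congrArg Subtype.val hxy)), fun x ↦ ?_⟩
  obtain ⟨y, hy, hyx⟩ := exists_apply_eq_of_mem_iInfRange hφ x.2
  exact ⟨⟨y, hy⟩, Subtype.ext hyx⟩

theorem coe_restrictIInfRange_pow_apply (n : ℕ) (x : φ.iInfRange) :
    ((φ.restrictIInfRange ^ n) x : G) = φ^[n] x :=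
  Semiconj.iterate_right (f := Subtype.val) (ga := φ.restrictIInfRange) (fun _ ↦ rfl) n x

theorem finite_iInfRange_of_restrict (hφ : Injective φ) [Group.FG φ.iInfRange]
    {Γ' : Subgroup G} [Γ'.FiniteIndex] {ψ : Monoid.End Γ'} (hψ : ∀ x, (ψ x : G) = φ x)
    [Finite ψ.iInfRange] : Finite φ.iInfRange := by
  let β := φ.restrictIInfRange
  let K := Γ'.subgroupOf φ.iInfRange
  let L := ⨅ n : ℕ, K.map ((β ^ n : Monoid.End φ.iInfRange) : φ.iInfRange →* φ.iInfRange)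
  have hL : L.FiniteIndex := Group.FG.finiteIndex_iInf_of_index_eq FiniteIndex.index_ne_zero
    fun n ↦ index_map_of_bijective ((bijective_restrictIInfRange hφ).iterate n) K
  have hLΓ' {x} (hx : x ∈ L) : (x : G) ∈ Γ' := by
    obtain ⟨z, hz, rfl⟩ := mem_iInf.mp hx 0
    exact hz
  have hLψ {x} (hx : x ∈ L) : ⟨x, hLΓ' hx⟩ ∈ ψ.iInfRange := by
    refine mem_iInfRange.mpr fun n ↦ ?_
    obtain ⟨z, hz, hzx⟩ := mem_iInf.mp hx (n + 1)
    refine ⟨⟨z, hz⟩, Subtype.ext ?_⟩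
    rw [Semiconj.iterate_right (f := Subtype.val) hψ]
    exact (coe_restrictIInfRange_pow_apply (n + 1) z).symm.trans (congrArg Subtype.val hzx)
  have : Finite L := .of_injective (fun x : L ↦ (⟨_, hLψ x.2⟩ : ψ.iInfRange)) fun x y hxy ↦
    Subtype.ext (Subtype.ext (congrArg (fun z : ψ.iInfRange ↦ ((z : Γ') : G)) hxy))
  exact (finite_iff_finite_and_finiteIndex L).mpr ⟨this, hL⟩

end Monoid.End

theorem stmt7_general {Γ : Type*} [Group Γ] (hfg : ∀ H : Subgroup Γ, H.FG)
    (φ : Monoid.End Γ)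
    (hinj : Function.Injective φ) (hfi : (MonoidHom.range (φ : Γ →* Γ)).FiniteIndex)
    (Γ' : Subgroup Γ) (hfiΓ' : Γ'.FiniteIndex)
    (ψ : Monoid.End ↥Γ') (hres : ∀ x : ↥Γ', (ψ x : Γ) = φ (x : Γ))
    (h : StronglyScaleInvariant ψ) :
    StronglyScaleInvariant φ := by
  have : Group.FG φ.iInfRange := (Group.fg_iff_subgroup_fg _).mpr (hfg _)
  have : Finite ψ.iInfRange := h.2.2
  exact ⟨hinj, hfi, Monoid.End.finite_iInfRange_of_restrict hinj hres⟩

theorem stmt7 {Γ : Type*} [Group Γ] (hfg : ∀ H : Subgroup Γ, H.FG)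
    (φ : Monoid.End Γ)
    (hinj : Function.Injective φ) (hfi : (MonoidHom.range (φ : Γ →* Γ)).FiniteIndex)
    (Γ' : Subgroup Γ) (hfiΓ' : Γ'.FiniteIndex) (hinv : ∀ x ∈ Γ', φ x ∈ Γ')
    (ψ : Monoid.End ↥Γ') (hres : ∀ x : ↥Γ', (ψ x : Γ) = φ (x : Γ))
    (h : StronglyScaleInvariant ψ) :
    StronglyScaleInvariant φ :=
  stmt7_general hfg φ hinj hfi Γ' hfiΓ' ψ hres h
end

section
/- Let N be a nilpotent group and φ: N → N an automorphism of finite order that induces the identity map on the abelianization N/[N,N]. Then φ is the identity automorphism, provided N is torsion-free and radicable. -/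
/-!
Write `D x = x⁻¹ * φ x`. If all displacements `D x` lie in a term `K` of the lower central series
and `H = ⁅K, ⊤⁆`, then modulo `H` they are central, so `D` becomes a homomorphism into the centre
of `G ⧸ H`. This homomorphism kills commutators, hence kills `K ∋ D x`; that is, `φ` fixes each
`D x` modulo `H`, so `D` is constant on `φ`-orbits and `D x ^ n` telescopes to `x⁻¹ * φ ^ n x = 1`.
A homomorphism whose values all have exponent `n` is trivial on a radicable group, so every
displacement already lies in `H`. Descending the lower central series to `⊥` gives `φ = 1`.
-/

/-- A group is radicable (divisible) if every element has an `m`-th root for each `m > 0`. -/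
def Radicable (G : Type*) [Group G] : Prop :=
  ∀ (x : G) (m : ℕ), 0 < m → ∃ y : G, y ^ m = x

/-- A monoid is torsion-free if its only element of finite order is the identity
(the definition Mathlib had as `Monoid.IsTorsionFree`, since removed). -/
def Monoid.IsTorsionFree (G : Type*) [Monoid G] : Prop :=
  ∀ g : G, g ≠ 1 → ¬IsOfFinOrder g

open scoped commutatorElement

theorem MonoidHom.eq_one_of_radicable_of_pow_eq_one {G M : Type*} [Group G] [Monoid M]
    (hrad : Radicable G) (f : G →* M) {n : ℕ} (hn : 0 < n) (hf : ∀ x, f x ^ n = 1) :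
    f = 1 := by
  ext x
  obtain ⟨y, rfl⟩ := hrad x n hn
  rw [map_pow, hf, MonoidHom.one_apply]

theorem MonoidHom.commutator_le_ker {G M : Type*} [Group G] [Group M] [IsMulCommutative M]
    (f : G →* M) : commutator G ≤ f.ker :=
  Subgroup.commutator_le.mpr fun a _ b _ ↦ by
    rw [MonoidHom.mem_ker, map_commutatorElement, commutatorElement_eq_one_iff_mul_comm,
      mul_comm']

namespace Subgroup

variable {G : Type*} [Group G] {H K : Subgroup G} [H.Normal]

theorem mk_mem_center_of_commutator_le (hK : ⁅K, ⊤⁆ ≤ H) {z : G} (hz : z ∈ K) :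
    (z : G ⧸ H) ∈ center (G ⧸ H) := by
  refine mem_center_iff.mpr (QuotientGroup.induction_on · fun g ↦ ?_)
  rw [← QuotientGroup.mk_mul, ← QuotientGroup.mk_mul, QuotientGroup.eq]
  have hcomm : (g * z)⁻¹ * (z * g) = ⁅z⁻¹, g⁻¹⁆ := by
    simp only [commutatorElement_def]; group
  exact hcomm ▸ hK (commutator_mem_commutator (inv_mem hz) (mem_top _))

end Subgroup

namespace MulAut

variable {G : Type*} [Group G] (φ : MulAut G) {H K : Subgroup G} [H.Normal]

def displacementHom (hK : ⁅K, ⊤⁆ ≤ H) (hφ : ∀ x, x⁻¹ * φ x ∈ K) :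
    G →* Subgroup.center (G ⧸ H) where
  toFun x := ⟨(x⁻¹ * φ x : G), Subgroup.mk_mem_center_of_commutator_le hK (hφ x)⟩
  map_one' := by ext; simp
  map_mul' x y := by
    ext
    have hcentral := Subgroup.mem_center_iff.mp
      (Subgroup.mk_mem_center_of_commutator_le hK (hφ x)) (y : G ⧸ H)
    have hconj : (x * y)⁻¹ * φ (x * y) = y⁻¹ * (x⁻¹ * φ x) * y * (y⁻¹ * φ y) := by
      rw [map_mul]; group
    rw [Subgroup.coe_mul]
    change ((_ : G) : G ⧸ H) = _
    rw [hconj, QuotientGroup.mk_mul, QuotientGroup.mk_mul, QuotientGroup.mk_mul,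
      mul_assoc ((y⁻¹ : G) : G ⧸ H), ← hcentral, QuotientGroup.mk_inv, inv_mul_cancel_left]

theorem displacementHom_coe (hK : ⁅K, ⊤⁆ ≤ H) (hφ : ∀ x, x⁻¹ * φ x ∈ K) (x : G) :
    (φ.displacementHom hK hφ x : G ⧸ H) = (x⁻¹ * φ x : G) :=
  rfl

theorem displacementHom_eq_one_iff (hK : ⁅K, ⊤⁆ ≤ H) (hφ : ∀ x, x⁻¹ * φ x ∈ K) (x : G) :
    φ.displacementHom hK hφ x = 1 ↔ x⁻¹ * φ x ∈ H := by
  rw [← QuotientGroup.eq_one_iff, ← displacementHom_coe, OneMemClass.coe_eq_one]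

theorem displacementHom_apply_self (hK : ⁅K, ⊤⁆ ≤ H) (hKc : K ≤ commutator G)
    (hφ : ∀ x, x⁻¹ * φ x ∈ K) (x : G) :
    φ.displacementHom hK hφ (φ x) = φ.displacementHom hK hφ x := by
  set z := x⁻¹ * φ x
  have hDz : φ.displacementHom hK hφ z = 1 :=
    (φ.displacementHom hK hφ).commutator_le_ker (hKc (hφ x))
  have hz : z⁻¹ * φ z ∈ H := (displacementHom_eq_one_iff φ hK hφ z).mp hDz
  ext
  rw [displacementHom_coe, displacementHom_coe, ← map_inv, ← map_mul]
  exact (QuotientGroup.eq.mpr hz).symm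

theorem displacementHom_apply_pow (hK : ⁅K, ⊤⁆ ≤ H) (hKc : K ≤ commutator G)
    (hφ : ∀ x, x⁻¹ * φ x ∈ K) (j : ℕ) (x : G) :
    φ.displacementHom hK hφ ((φ ^ j) x) = φ.displacementHom hK hφ x := by
  induction j with
  | zero => rfl
  | succ j ih => rw [pow_succ', mul_apply, displacementHom_apply_self φ hK hKc, ih]

theorem coe_displacementHom_pow (hK : ⁅K, ⊤⁆ ≤ H) (hKc : K ≤ commutator G)
    (hφ : ∀ x, x⁻¹ * φ x ∈ K) (j : ℕ) (x : G) :
    ((φ.displacementHom hK hφ x ^ j : Subgroup.center (G ⧸ H)) : G ⧸ H) =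
      (x⁻¹ * (φ ^ j) x : G) := by
  induction j with
  | zero => simp
  | succ j ih =>
    have htelescope :
        x⁻¹ * (φ ^ (j + 1)) x = (x⁻¹ * (φ ^ j) x) * (((φ ^ j) x)⁻¹ * φ ((φ ^ j) x)) := by
      rw [pow_succ', mul_apply]; group
    rw [pow_succ, Subgroup.coe_mul, ih, ← displacementHom_apply_pow φ hK hKc hφ j,
      displacementHom_coe, htelescope, ← QuotientGroup.mk_mul]

theorem displacement_mem_of_isOfFinOrder (hrad : Radicable G) (hord : IsOfFinOrder φ)
    (hK : ⁅K, ⊤⁆ ≤ H) (hKc : K ≤ commutator G) (hφ : ∀ x, x⁻¹ * φ x ∈ K) (x : G) :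
    x⁻¹ * φ x ∈ H := by
  obtain ⟨n, hn, hφn⟩ := isOfFinOrder_iff_pow_eq_one.mp hord
  have hD : φ.displacementHom hK hφ = 1 := by
    refine MonoidHom.eq_one_of_radicable_of_pow_eq_one hrad _ hn fun y ↦ ?_
    ext
    rw [coe_displacementHom_pow φ hK hKc, hφn, one_apply, inv_mul_cancel]
    rfl
  rw [← displacementHom_eq_one_iff φ hK hφ, hD, MonoidHom.one_apply]

theorem displacement_mem_lowerCentralSeries (hrad : Radicable G) (hord : IsOfFinOrder φ)
    (h : ∀ x, x⁻¹ * φ x ∈ commutator G) (k : ℕ) (x : G) :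
    x⁻¹ * φ x ∈ (⊤ : Subgroup G).lowerCentralSeries (k + 1) := by
  induction k generalizing x with
  | zero => exact h x
  | succ k ih =>
    exact φ.displacement_mem_of_isOfFinOrder hrad hord le_rfl
      ((⊤ : Subgroup G).lowerCentralSeries_antitone (Nat.le_add_left 1 k)) ih x

theorem eq_one_of_isNilpotent [Group.IsNilpotent G] (hrad : Radicable G) (hord : IsOfFinOrder φ)
    (h : ∀ x, x⁻¹ * φ x ∈ commutator G) : φ = 1 := by
  obtain ⟨c, hc⟩ := Subgroup.nilpotent_iff_lowerCentralSeries.mp ‹Group.IsNilpotent G›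
  ext x
  have hx := (⊤ : Subgroup G).lowerCentralSeries_antitone c.le_succ
    (φ.displacement_mem_lowerCentralSeries hrad hord h c x)
  rwa [hc, Subgroup.mem_bot, inv_mul_eq_one, eq_comm] at hx

end MulAut

theorem stmt10_general {N : Type*} [Group N] [Group.IsNilpotent N]
    (hrad : Radicable N) (φ : MulAut N)
    (hord : IsOfFinOrder φ)
    (h : ∀ x : N, φ x * x⁻¹ ∈ commutator N) :
    φ = 1 :=
  φ.eq_one_of_isNilpotent hrad hord fun x ↦ Subgroup.Normal.mem_comm inferInstance (h x)

theorem stmt10 {N : Type*} [Group N] [Group.IsNilpotent N]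
    (htf : Monoid.IsTorsionFree N) (hrad : Radicable N) (φ : MulAut N)
    (hord : IsOfFinOrder φ)
    (h : ∀ x : N, φ x * x⁻¹ ∈ commutator N) :
    φ = 1 :=
  stmt10_general hrad φ hord h
end

section
/- Let φ: ℤᵐ → ℤᵐ be an injective endomorphism (given by an integer matrix with nonzero determinant) all of whose complex eigenvalues have absolute value strictly greater than 1. Then ⋂_{n>0} φⁿ(ℤᵐ) = {0}. -/
/-!
Over `ℂ`, `0` is not an eigenvalue, so `A` is invertible, and the eigenvalues of `A⁻¹` lie in the
open unit disc. By Gelfand's formula `A⁻ⁿ → 0`. If `x = Aⁿ yₙ` for every `n`, then the integer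
vectors `yₙ = A⁻ⁿ x` tend to `0`, so `yₙ = 0` for large `n` and hence `x = 0`.
-/

open Filter Topology Matrix
open scoped NNReal ENNReal

section BanachAlgebra

variable {A : Type*} [NormedRing A] [NormedAlgebra ℂ A] [CompleteSpace A]

theorem tendsto_pow_atTop_nhds_zero_of_spectralRadius_lt_one {a : A}
    (h : spectralRadius ℂ a < 1) : Tendsto (a ^ ·) atTop (𝓝 0) := by
  obtain ⟨r, hρr, hr1⟩ := ENNReal.lt_iff_exists_nnreal_btwn.mp h
  have hpow : ∀ᶠ n : ℕ in atTop, ‖a ^ n‖ ≤ (r : ℝ) ^ n := by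
    filter_upwards [eventually_gt_atTop 0,
      (spectrum.pow_nnnorm_pow_one_div_tendsto_nhds_spectralRadius a).eventually_lt_const hρr]
      with n hn0 hn
    rw [← ENNReal.coe_rpow_of_nonneg _ (by positivity), ENNReal.coe_lt_coe, one_div,
      NNReal.rpow_inv_lt_iff (by positivity), NNReal.rpow_natCast] at hn
    exact_mod_cast hn.le
  rw [tendsto_zero_iff_norm_tendsto_zero]
  exact squeeze_zero' (.of_forall fun n => norm_nonneg _) hpow
    (tendsto_pow_atTop_nhds_zero_of_lt_one r.coe_nonneg (mod_cast ENNReal.coe_lt_one_iff.mp hr1))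

theorem spectralRadius_inv_lt_one {u : Aˣ} (h : ∀ μ ∈ spectrum ℂ (u : A), 1 < ‖μ‖) :
    spectralRadius ℂ (↑u⁻¹ : A) < 1 := by
  -- `A` may be trivial, and then the spectrum is empty.
  rcases (spectrum ℂ (↑u⁻¹ : A)).eq_empty_or_nonempty with hσ | hσ
  · simp [spectralRadius, hσ]
  refine spectrum.spectralRadius_lt_of_forall_lt_of_nonempty (r := 1) hσ fun k hk => ?_
  have hk0 : k ≠ 0 := spectrum.ne_zero_of_mem_of_unit hk
  have hinv := h k⁻¹ (by
    have := (spectrum.inv_mem_iff (r := Units.mk0 k hk0) (a := u⁻¹)).mp hk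
    rwa [inv_inv, Units.val_inv_eq_inv_val, Units.val_mk0] at this)
  rw [norm_inv, one_lt_inv_iff₀] at hinv
  exact_mod_cast hinv.2

end BanachAlgebra

theorem eventually_eq_zero_of_tendsto_intCast {ι n : Type*} [Finite n] {l : Filter ι}
    {y : ι → n → ℤ} (h : Tendsto (fun k i => (y k i : ℂ)) l (𝓝 0)) : ∀ᶠ k in l, y k = 0 := by
  have hcoord (i : n) : ∀ᶠ k in l, y k i = 0 := by
    filter_upwards [(tendsto_pi_nhds.1 h i).eventually (Metric.ball_mem_nhds 0 one_pos)] with k hk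
    rw [dist_zero_right, Complex.norm_intCast] at hk
    exact Int.abs_lt_one_iff.1 (mod_cast hk)
  filter_upwards [eventually_all.2 hcoord] with k hk
  exact funext hk

theorem Matrix.iInf_range_mulVecLin_pow_eq_bot {n : Type*} [Fintype n] [DecidableEq n]
    {M : Matrix n n ℤ} {C : Matrix n n ℂ} (hCM : C * M.map (Int.cast : ℤ → ℂ) = 1)
    (hC : Tendsto (C ^ ·) atTop (𝓝 0)) :
    (⨅ k : ℕ, LinearMap.range (M ^ (k + 1)).mulVecLin) = ⊥ := by
  refine eq_bot_iff.2 fun x hx => ?_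
  choose y hy using fun k => LinearMap.mem_range.1 ((Submodule.mem_iInf _).1 hx k)
  have hyC (k : ℕ) : (fun i => (y k i : ℂ)) = C ^ (k + 1) *ᵥ fun i => (x i : ℂ) := by
    have hcast : M.map (Int.cast : ℤ → ℂ) ^ (k + 1) *ᵥ (fun i => (y k i : ℂ)) =
        fun i => (x i : ℂ) := by
      have hpow := map_pow (Int.castRingHom ℂ).mapMatrix M (k + 1)
      simp only [RingHom.mapMatrix_apply, Int.coe_castRingHom] at hpow
      funext i
      rw [← hy k, mulVecLin_apply, ← hpow]
      exact ((Int.castRingHom ℂ).map_mulVec _ _ i).symm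
    rw [← hcast, mulVec_mulVec, pow_mul_pow_eq_one (k + 1) hCM, one_mulVec]
  have hlim : Tendsto (fun k i => (y k i : ℂ)) atTop (𝓝 0) := by
    rw [show (fun k i => (y k i : ℂ)) = _ from funext hyC]
    simpa [Function.comp_def] using ((continuous_id.matrix_mulVec continuous_const).tendsto 0).comp
      (hC.comp (tendsto_add_atTop_nat 1))
  obtain ⟨k, hk⟩ := (eventually_eq_zero_of_tendsto_intCast hlim).exists
  rw [Submodule.mem_bot, ← hy k, hk, map_zero]

theorem stmt13_general {m : ℕ} (A : Matrix (Fin m) (Fin m) ℤ)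
    (heig : ∀ μ ∈ spectrum ℂ (A.map (Int.cast : ℤ → ℂ)), 1 < ‖μ‖) :
    (⨅ n : ℕ, LinearMap.range (Matrix.mulVecLin (A ^ (n + 1)))) = ⊥ := by
  let := Matrix.linftyOpNormedRing (n := Fin m) (α := ℂ)
  let := Matrix.linftyOpNormedAlgebra (n := Fin m) (R := ℂ) (α := ℂ)
  have : CompleteSpace (Matrix (Fin m) (Fin m) ℂ) := FiniteDimensional.complete ℂ _
  obtain ⟨u, hu⟩ : IsUnit (A.map (Int.cast : ℤ → ℂ)) := by
    by_contra h
    have := heig 0 ((spectrum.zero_mem_iff ℂ).2 h)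
    norm_num at this
  refine Matrix.iInf_range_mulVecLin_pow_eq_bot (C := ↑u⁻¹) (by rw [← hu, Units.inv_mul]) ?_
  exact tendsto_pow_atTop_nhds_zero_of_spectralRadius_lt_one (spectralRadius_inv_lt_one (hu ▸ heig))

theorem stmt13 {m : ℕ} (A : Matrix (Fin m) (Fin m) ℤ) (hdet : A.det ≠ 0)
    (heig : ∀ μ ∈ spectrum ℂ (A.map (Int.cast : ℤ → ℂ)), 1 < ‖μ‖) :
    (⨅ n : ℕ, LinearMap.range (Matrix.mulVecLin (A ^ (n + 1)))) = ⊥ :=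
  stmt13_general A heig
end

section
/- Let N^ℚ be a torsion-free radicable nilpotent group, F a finite group, ρ: F → Aut(N^ℚ) a homomorphism, and G = N^ℚ ⋊_ρ F the semidirect product. Let N ≤ N^ℚ be a full subgroup, i.e., for every x ∈ N^ℚ there exists m > 0 with xᵐ ∈ N. Then the centralizer of N in G equals {(x, f) : x ∈ Z(N^ℚ), f ∈ ker(ρ)}, provided that every automorphism of N^ℚ of finite order inducing the identity on N^ℚ/[N^ℚ,N^ℚ] is trivial. -/
/-!
Isolation of the upper central series: in a torsion-free group, if `x ∈ ζ_{k+1}` and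
`x ^ n ∈ ζ_k` then `x ∈ ζ_k`, by induction on `k` applied to `⁅x, y⁆`, using
`⁅x ^ n, y⁆ ≡ ⁅x, y⁆ ^ n` modulo `ζ_{k-1}`. Hence in a torsion-free nilpotent group `G ⧸ Z(G)` is
again torsion-free, and induction on the class shows that `n`-th roots are unique.

`(x, f)` centralizes `N` exactly when `ρ f` agrees with conjugation by `x⁻¹` on `N`; since `N` is
full and roots are unique, they agree on all of `N^ℚ`. So `ρ f` is an inner automorphism of finite
order acting trivially on `N^ℚ ⧸ [N^ℚ, N^ℚ]`, hence trivial, and then `x` is central.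
-/

open scoped commutatorElement

theorem commutatorElement_pow_of_commute {G : Type*} [Group G] {x y : G}
    (h : Commute ⁅x, y⁆ x) (j : ℕ) : ⁅x ^ j, y⁆ = ⁅x, y⁆ ^ j := by
  have conj_pow : ∀ j : ℕ, x ^ j * y * (x ^ j)⁻¹ = ⁅x, y⁆ ^ j * y := by
    intro j
    induction j with
    | zero => simp
    | succ j ih =>
      calc x ^ (j + 1) * y * (x ^ (j + 1))⁻¹ = x * (x ^ j * y * (x ^ j)⁻¹) * x⁻¹ := by group
        _ = ⁅x, y⁆ ^ j * (x * y * x⁻¹) := by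
          rw [ih, ← mul_assoc, ← (h.pow_left j).eq]; group
        _ = ⁅x, y⁆ ^ (j + 1) * y := by
          rw [pow_succ, mul_assoc, mul_assoc, commutatorElement_def]; group
  rw [commutatorElement_def, conj_pow, mul_inv_cancel_right]

namespace Subgroup

variable {G : Type*} [Group G]

theorem mem_upperCentralSeries_of_pow_mem_of_mem_succ (htf : Monoid.IsTorsionFree G)
    {k n : ℕ} (hn : 0 < n) {x : G} (hx : x ∈ upperCentralSeries G (k + 1))
    (hxn : x ^ n ∈ upperCentralSeries G k) : x ∈ upperCentralSeries G k := by
  induction k generalizing x with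
  | zero =>
    rw [upperCentralSeries_zero, mem_bot] at hxn ⊢
    by_contra hx1
    exact htf x hx1 (isOfFinOrder_iff_pow_eq_one.mpr ⟨n, hn, hxn⟩)
  | succ k ih =>
    rw [mem_upperCentralSeries_succ_iff]
    intro y
    have hw : ⁅x, y⁆ ∈ upperCentralSeries G (k + 1) := mem_upperCentralSeries_succ_iff.mp hx y
    refine ih hw ?_
    let π := QuotientGroup.mk' (upperCentralSeries G k)
    have hπ : ∀ z, π z = 1 ↔ z ∈ upperCentralSeries G k := fun z => QuotientGroup.eq_one_iff z
    have hcomm : Commute ⁅π x, π y⁆ (π x) := by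
      rw [commute_iff_eq, ← commutatorElement_eq_one_iff_mul_comm, ← map_commutatorElement,
        ← map_commutatorElement, hπ]
      exact mem_upperCentralSeries_succ_iff.mp hw x
    rw [← hπ, map_pow, map_commutatorElement, ← commutatorElement_pow_of_commute hcomm,
      ← map_pow, ← map_commutatorElement, hπ]
    exact mem_upperCentralSeries_succ_iff.mp hxn y

theorem mem_upperCentralSeries_of_pow_mem [Group.IsNilpotent G] (htf : Monoid.IsTorsionFree G)
    {k n : ℕ} (hn : 0 < n) {x : G} (hxn : x ^ n ∈ upperCentralSeries G k) :
    x ∈ upperCentralSeries G k := by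
  suffices descend : ∀ m, x ∈ upperCentralSeries G (k + m) → x ∈ upperCentralSeries G k by
    obtain ⟨c, hc⟩ := Group.IsNilpotent.nilpotent G
    exact descend c (upperCentralSeries_mono G (Nat.le_add_left c k) (hc ▸ mem_top x))
  intro m
  induction m with
  | zero => exact id
  | succ m ih =>
    intro hx
    exact ih (mem_upperCentralSeries_of_pow_mem_of_mem_succ htf hn hx
      (upperCentralSeries_mono G (Nat.le_add_right k m) hxn))

theorem mem_center_of_pow_mem [Group.IsNilpotent G] (htf : Monoid.IsTorsionFree G)
    {n : ℕ} (hn : 0 < n) {x : G} (hxn : x ^ n ∈ center G) : x ∈ center G := by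
  rw [← upperCentralSeries_one] at hxn ⊢
  exact mem_upperCentralSeries_of_pow_mem htf hn hxn

end Subgroup

theorem Monoid.IsTorsionFree.quotient_center {G : Type*} [Group G] [Group.IsNilpotent G]
    (htf : Monoid.IsTorsionFree G) : Monoid.IsTorsionFree (G ⧸ Subgroup.center G) := by
  rintro ⟨x⟩ hx hfin
  obtain ⟨n, hn, hxn⟩ := isOfFinOrder_iff_pow_eq_one.mp hfin
  refine hx ((QuotientGroup.eq_one_iff x).mpr (Subgroup.mem_center_of_pow_mem htf hn ?_))
  exact (QuotientGroup.eq_one_iff _).mp hxn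

theorem Monoid.IsTorsionFree.isMulTorsionFree {G : Type*} [Group G] [Group.IsNilpotent G]
    (htf : Monoid.IsTorsionFree G) : IsMulTorsionFree G := by
  revert htf
  refine Group.nilpotent_center_quotient_ind
    (P := fun G _ _ => Monoid.IsTorsionFree G → IsMulTorsionFree G) G
    (fun _ _ _ _ => inferInstance) fun G _ _ ih htf => ?_
  refine ⟨fun n hn a b (hab : a ^ n = b ^ n) => ?_⟩
  have : IsMulTorsionFree (G ⧸ Subgroup.center G) := ih htf.quotient_center
  have hq : (a : G ⧸ Subgroup.center G) = b := pow_left_injective hn (by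
    simp only [← QuotientGroup.mk_pow]; exact congrArg _ hab)
  obtain ⟨z, hz, rfl⟩ : ∃ z ∈ Subgroup.center G, b = a * z :=
    ⟨a⁻¹ * b, QuotientGroup.eq.mp hq, (mul_inv_cancel_left a b).symm⟩
  have hzn : z ^ n = 1 := by
    rwa [Commute.mul_pow (Subgroup.mem_center_iff.mp hz a), left_eq_mul] at hab
  have hz1 : z = 1 := by
    by_contra hne
    exact htf z hne (isOfFinOrder_iff_pow_eq_one.mpr ⟨n, Nat.pos_of_ne_zero hn, hzn⟩)
  rw [hz1, mul_one]

theorem MonoidHom.eq_of_eqOn_of_forall_exists_pow_mem {G H : Type*} [Group G] [Monoid H]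
    [IsMulTorsionFree H] {N : Subgroup G} (hN : ∀ x : G, ∃ m : ℕ, 0 < m ∧ x ^ m ∈ N)
    {f g : G →* H} (h : Set.EqOn f g N) : f = g := by
  ext x
  obtain ⟨m, hm, hxm⟩ := hN x
  exact pow_left_injective hm.ne' (by simpa only [map_pow] using h hxm)

theorem MulAut.conj_eq_one_iff {G : Type*} [Group G] {g : G} :
    MulAut.conj g = 1 ↔ g ∈ Subgroup.center G := by
  simp only [MulEquiv.ext_iff, conj_apply, one_apply, Subgroup.mem_center_iff]
  exact forall_congr' fun x => by rw [mul_inv_eq_iff_eq_mul, eq_comm]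

theorem SemidirectProduct.mem_centralizer_map_inl_iff {N G : Type*} [Group N] [Group G]
    {φ : G →* MulAut N} (H : Subgroup N) (g : N ⋊[φ] G) :
    g ∈ Subgroup.centralizer (H.map (inl : N →* N ⋊[φ] G) : Set (N ⋊[φ] G)) ↔
      Set.EqOn (φ g.right) (MulAut.conj g.left⁻¹) H := by
  simp only [Subgroup.mem_centralizer_iff, Subgroup.coe_map, Set.forall_mem_image,
    SemidirectProduct.ext_iff, mul_left, mul_right, left_inl, right_inl, map_one, one_mul,
    mul_one, MulAut.one_apply, and_true, Set.EqOn, MulAut.conj_apply, inv_inv, SetLike.mem_coe]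
  refine forall₂_congr fun y _ => ?_
  rw [mul_assoc, eq_inv_mul_iff_mul_eq, eq_comm]

theorem stmt15_general {NQ F : Type*} [Group NQ] [Group F] [Finite F]
    [Group.IsNilpotent NQ] (htf : Monoid.IsTorsionFree NQ)
    (ρ : F →* MulAut NQ)
    (N : Subgroup NQ) (hfull : ∀ x : NQ, ∃ m : ℕ, 0 < m ∧ x ^ m ∈ N)
    (hfin : ∀ ψ : MulAut NQ, IsOfFinOrder ψ →
      (∀ x : NQ, ψ x * x⁻¹ ∈ commutator NQ) → ψ = 1) :
    ∀ g : NQ ⋊[ρ] F,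
      g ∈ Subgroup.centralizer
        ((N.map (SemidirectProduct.inl : NQ →* NQ ⋊[ρ] F)) : Set (NQ ⋊[ρ] F)) ↔
      (g.left ∈ Subgroup.center NQ ∧ g.right ∈ ρ.ker) := by
  have := htf.isMulTorsionFree
  rintro ⟨x, f⟩
  have eqOn_iff_eq : Set.EqOn (ρ f) (MulAut.conj x⁻¹) N ↔ ρ f = MulAut.conj x⁻¹ :=
    ⟨fun h => MulEquiv.toMonoidHom_injective
      (MonoidHom.eq_of_eqOn_of_forall_exists_pow_mem hfull h), fun h => h ▸ Set.eqOn_refl _ _⟩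
  rw [SemidirectProduct.mem_centralizer_map_inl_iff, eqOn_iff_eq, MonoidHom.mem_ker,
    ← inv_mem_iff, ← MulAut.conj_eq_one_iff]
  constructor
  · intro h
    have hρ : ρ f = 1 := hfin _ (ρ.isOfFinOrder (isOfFinOrder_of_finite f)) fun z => by
      rw [h]
      -- `MulAut.conj x⁻¹ z * z⁻¹` is literally `⁅x⁻¹, z⁆`
      exact Subgroup.commutator_mem_commutator (Subgroup.mem_top x⁻¹) (Subgroup.mem_top z)
    exact ⟨h ▸ hρ, hρ⟩
  · rintro ⟨hx, hρ⟩
    rw [hρ, hx]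

theorem stmt15 {NQ F : Type*} [Group NQ] [Group F] [Finite F]
    [Group.IsNilpotent NQ] (htf : Monoid.IsTorsionFree NQ) (hrad : Radicable NQ)
    (ρ : F →* MulAut NQ)
    (N : Subgroup NQ) (hfull : ∀ x : NQ, ∃ m : ℕ, 0 < m ∧ x ^ m ∈ N)
    (hfin : ∀ ψ : MulAut NQ, IsOfFinOrder ψ →
      (∀ x : NQ, ψ x * x⁻¹ ∈ commutator NQ) → ψ = 1) :
    ∀ g : NQ ⋊[ρ] F,
      g ∈ Subgroup.centralizer
        ((N.map (SemidirectProduct.inl : NQ →* NQ ⋊[ρ] F)) : Set (NQ ⋊[ρ] F)) ↔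
      (g.left ∈ Subgroup.center NQ ∧ g.right ∈ ρ.ker) :=
  stmt15_general htf ρ N hfull hfin
end

section
/- Let Γ be a group, N ◁ Γ a normal subgroup invariant under an endomorphism φ: Γ → Γ, with quotient G = Γ/N finite. If the Reidemeister number R(φ) is finite, then the Reidemeister number R(φ_N) of the restriction of φ to N is also finite. -/
/-! Inclusion `N → Γ` induces a map from `ψ`-twisted classes of `N` to `φ`-twisted classes of `Γ`
with finite fibres: if `y ∈ N` is `φ`-conjugate to `x₀ ∈ N`, say `y = z x₀ φ(z)⁻¹`, then the
`ψ`-class of `y` depends only on the coset `z⁻¹N`, so a fibre has at most `[Γ : N]` elements.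
Finitely many classes downstairs, each with a finite fibre, give finitely many classes of `ψ`. -/

/-- The Reidemeister number of `φ` is finite: the quotient of the group by the
`φ`-conjugacy (twisted conjugacy) relation `x ~ y ↔ ∃ z, x = z * y * (φ z)⁻¹` is finite. -/
def ReidemeisterFinite {G : Type*} [Group G] (φ : G →* G) : Prop :=
  Finite (Quot (fun x y : G => ∃ z : G, x = z * y * (φ z)⁻¹))

section TwistedConj

variable {G : Type*} [Group G]

def TwistedConj (φ : G →* G) (x y : G) : Prop :=
  ∃ z : G, x = z * y * (φ z)⁻¹

theorem TwistedConj.equivalence (φ : G →* G) : Equivalence (TwistedConj φ) where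
  refl _ := ⟨1, by simp⟩
  symm := by
    rintro _ y ⟨z, rfl⟩
    exact ⟨z⁻¹, by simp [mul_assoc]⟩
  trans := by
    rintro _ _ _ ⟨z, rfl⟩ ⟨u, rfl⟩
    exact ⟨z * u, by simp [mul_assoc]⟩

theorem TwistedConj.mk_eq_mk_iff {φ : G →* G} {x y : G} :
    Quot.mk (TwistedConj φ) x = Quot.mk _ y ↔ TwistedConj φ x y := by
  rw [Quot.eq, (TwistedConj.equivalence φ).eqvGen_iff]

end TwistedConj

theorem Subgroup.finite_range_of_apply_mul_eq {Γ β : Type*} [Group Γ] (N : Subgroup Γ)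
    [Finite (Γ ⧸ N)] {f : Γ → β} (hf : ∀ z, ∀ n ∈ N, f (z * n) = f z) :
    (Set.range f).Finite := by
  have hlift : ∀ a b, QuotientGroup.leftRel N a b → f a = f b := by
    intro a b hab
    rw [QuotientGroup.leftRel_apply] at hab
    simpa using (hf a _ hab).symm
  rw [← Set.range_quotient_lift (s := QuotientGroup.leftRel N) hlift]
  exact Set.finite_range _

section Restriction

variable {Γ : Type*} [Group Γ] {N : Subgroup Γ} {φ : Γ →* Γ} {ψ : N →* N}

theorem TwistedConj.of_restrict (hres : ∀ x : N, (ψ x : Γ) = φ x) {x y : N}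
    (hxy : TwistedConj ψ x y) : TwistedConj φ x y := by
  obtain ⟨z, rfl⟩ := hxy
  exact ⟨z, by simp [hres]⟩

variable (ψ) in
def twistedClassesInclusion (hres : ∀ x : N, (ψ x : Γ) = φ x) :
    Quot (TwistedConj ψ) → Quot (TwistedConj φ) :=
  Quot.map Subtype.val fun _ _ ↦ TwistedConj.of_restrict hres

theorem map_mem_of_restrict (hres : ∀ x : N, (ψ x : Γ) = φ x) {n : Γ} (hn : n ∈ N) :
    φ n ∈ N :=
  hres ⟨n, hn⟩ ▸ (ψ ⟨n, hn⟩).2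

theorem finite_fiber_twistedClassesInclusion [Finite (Γ ⧸ N)]
    (hres : ∀ x : N, (ψ x : Γ) = φ x) (a : Quot (TwistedConj ψ)) :
    (twistedClassesInclusion ψ hres ⁻¹' {twistedClassesInclusion ψ hres a}).Finite := by
  classical
  obtain ⟨x₀, rfl⟩ := Quot.exists_rep a
  let g : Γ → Quot (TwistedConj ψ) := fun z ↦
    if h : z⁻¹ * x₀ * φ z ∈ N then Quot.mk _ ⟨_, h⟩ else Quot.mk _ x₀
  refine (N.finite_range_of_apply_mul_eq (f := g) ?_).subset ?_
  · intro z n hn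
    have hφn := map_mem_of_restrict hres hn
    have hconj : (z * n)⁻¹ * x₀ * φ (z * n) = n⁻¹ * (z⁻¹ * x₀ * φ z) * φ n := by
      simp [mul_assoc]
    have hmem : (z * n)⁻¹ * x₀ * φ (z * n) ∈ N ↔ z⁻¹ * x₀ * φ z ∈ N := by
      rw [hconj, N.mul_mem_cancel_right hφn, N.mul_mem_cancel_left (N.inv_mem hn)]
    by_cases hw : z⁻¹ * x₀ * φ z ∈ N
    · simp only [g, dif_pos hw, dif_pos (hmem.mpr hw)]
      refine Quot.sound ⟨⟨n⁻¹, N.inv_mem hn⟩, Subtype.ext ?_⟩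
      simp [hres, mul_assoc]
    · simp only [g, dif_neg hw, dif_neg (mt hmem.mp hw)]
  · rintro a ha
    obtain ⟨y, rfl⟩ := Quot.exists_rep a
    obtain ⟨z, hz⟩ := TwistedConj.mk_eq_mk_iff.mp ha
    have hy : (z⁻¹)⁻¹ * x₀ * φ z⁻¹ = y := by simp [hz]
    refine ⟨z⁻¹, ?_⟩
    simp only [g, dif_pos (hy ▸ y.2)]
    exact congrArg _ (Subtype.ext hy)

theorem ReidemeisterFinite.of_restrict [Finite (Γ ⧸ N)]
    (hres : ∀ x : N, (ψ x : Γ) = φ x) (h : ReidemeisterFinite φ) : ReidemeisterFinite ψ := by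
  have : Finite (Quot (TwistedConj φ)) := h
  show Finite (Quot (TwistedConj ψ))
  refine Set.finite_univ_iff.mp <| Set.Finite.of_finite_fibers (twistedClassesInclusion ψ hres)
    (Set.toFinite _) ?_
  rintro _ ⟨a, -, rfl⟩
  rw [Set.univ_inter]
  exact finite_fiber_twistedClassesInclusion hres a

end Restriction

theorem stmt16_general {Γ : Type*} [Group Γ] (N : Subgroup Γ)
    (φ : Monoid.End Γ)
    (hfin : Finite (Γ ⧸ N))
    (ψ : Monoid.End ↥N) (hres : ∀ x : ↥N, (ψ x : Γ) = φ (x : Γ))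
    (h : ReidemeisterFinite (φ : Γ →* Γ)) :
    ReidemeisterFinite (ψ : ↥N →* ↥N) :=
  ReidemeisterFinite.of_restrict (ψ := (ψ : ↥N →* ↥N)) hres h

theorem stmt16 {Γ : Type*} [Group Γ] (N : Subgroup Γ) [N.Normal]
    (φ : Monoid.End Γ) (hNinv : ∀ x ∈ N, φ x ∈ N)
    (hfin : Finite (Γ ⧸ N))
    (ψ : Monoid.End ↥N) (hres : ∀ x : ↥N, (ψ x : Γ) = φ (x : Γ))
    (h : ReidemeisterFinite (φ : Γ →* Γ)) :
    ReidemeisterFinite (ψ : ↥N →* ↥N) :=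
  stmt16_general N φ hfin ψ hres h
end
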